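/- In the two-state counterexample, IBU cannot represent a belief collapse: suppose U = {u⁰, u¹} with a transition function δ such that δ(u¹, σ) = u¹ for all σ (u¹ is absorbing). If the IBU belief at time t satisfies ũ_t(u¹) = 1/2, then for any abstraction output M_t ∈ Δ(Σ), the updated belief satisfies ũ_{t+1}(u¹) ≥ 1/2. In particular, the updated belief cannot assign probability 1 to u⁰. -/

import Mathlib

/-!
The IBU update only moves mass along transitions and preserves total mass. Mass sitting on an
absorbing state stays there, so `b' true ≥ b true = 1/2`; since the total mass is still `1`,
`b' false ≤ 1/2`.
-/

open Finset

section IBU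

variable {U Sg : Type*} [Fintype U] [DecidableEq U] [Fintype Sg]

def ibuUpdate (δ : U → Sg → U) (b : U → ℝ) (m : Sg → ℝ) (u : U) : ℝ :=
  ∑ s : Sg, ∑ u' : U, (if δ u' s = u then (1 : ℝ) else 0) * b u' * m s

theorem sum_ibuUpdate (δ : U → Sg → U) (b : U → ℝ) (m : Sg → ℝ) :
    ∑ u, ibuUpdate δ b m u = (∑ u, b u) * ∑ s, m s := by
  rw [mul_sum]
  unfold ibuUpdate
  rw [sum_comm]
  refine sum_congr rfl fun s _ => ?_
  rw [sum_comm, sum_mul]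
  refine sum_congr rfl fun u' _ => ?_
  rw [← sum_mul, ← sum_mul, sum_ite_eq, if_pos (mem_univ _), one_mul]

theorem mul_sum_le_ibuUpdate_of_absorbing {δ : U → Sg → U} {u : U} (habs : ∀ s, δ u s = u)
    {b : U → ℝ} (hb : ∀ u, 0 ≤ b u) {m : Sg → ℝ} (hm : ∀ s, 0 ≤ m s) :
    b u * ∑ s, m s ≤ ibuUpdate δ b m u := by
  rw [mul_sum]
  refine sum_le_sum fun s _ => ?_
  have hterm : b u * m s = (if δ u s = u then (1 : ℝ) else 0) * b u * m s := by
    simp [habs s]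
  rw [hterm]
  exact single_le_sum (f := fun u' => (if δ u' s = u then (1 : ℝ) else 0) * b u' * m s)
    (fun u' _ => mul_nonneg (mul_nonneg (by split_ifs <;> norm_num) (hb u')) (hm s)) (mem_univ u)

end IBU

/-- Two-state counterexample: with `true` (u¹) absorbing and current IBU belief
1/2 on u¹, any IBU update keeps at least 1/2 mass on u¹; in particular the
updated belief cannot be a point mass on u⁰ (`false`). -/
theorem ibu_cannot_collapse {Sg : Type*} [Fintype Sg]
    (δ : Bool → Sg → Bool) (habs : ∀ s, δ true s = true)
    (b : Bool → ℝ) (hb0 : ∀ u, 0 ≤ b u) (hb1 : b false + b true = 1)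
    (hhalf : b true = 1 / 2)
    (m : Sg → ℝ) (hm0 : ∀ s, 0 ≤ m s) (hm1 : ∑ s : Sg, m s = 1)
    (b' : Bool → ℝ)
    (hb' : ∀ u, b' u =
      ∑ s : Sg, ∑ u' : Bool, (if δ u' s = u then (1 : ℝ) else 0) * b u' * m s) :
    1 / 2 ≤ b' true ∧ b' false ≠ 1 := by
  obtain rfl : b' = ibuUpdate δ b m := funext hb'
  have htrue : 1 / 2 ≤ ibuUpdate δ b m true := by
    simpa [hhalf, hm1] using mul_sum_le_ibuUpdate_of_absorbing habs hb0 hm0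
  have htotal : ibuUpdate δ b m true + ibuUpdate δ b m false = 1 := by
    simpa [add_comm (b true), hb1, hm1] using sum_ibuUpdate δ b m
  exact ⟨htrue, by linarith⟩
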